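/- arXiv:2309.13855 — 3 statements merged into one kernel-verified Lean document; each statement's English description precedes it below -/
import Mathlib

section
/- Uniqueness of the Sinkhorn scaling factor: if X has positive entries and (r,c), (r',c') are pairs of positive vectors such that both D(r)XD(c) and D(r')XD(c') are doubly stochastic, then the rank-one matrices r cᵀ and r' c'ᵀ are equal; equivalently, D(r)XD(c) = D(r')XD(c'). -/
open Matrix

/-- Uniqueness of the Sinkhorn scaling factor: if `D(r)XD(c)` and `D(r')XD(c')` are
both doubly stochastic with `X` entrywise positive and `r, c, r', c'` positive, then
`r cᵀ = r' c'ᵀ` and the two doubly stochastic matrices coincide. -/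
theorem stmt4 {n : ℕ} (X : Matrix (Fin n) (Fin n) ℝ) (r c r' c' : Fin n → ℝ)
    (hX : ∀ i j, 0 < X i j)
    (hr : ∀ i, 0 < r i) (hc : ∀ i, 0 < c i)
    (hr' : ∀ i, 0 < r' i) (hc' : ∀ i, 0 < c' i)
    (h1 : Matrix.diagonal r * X * Matrix.diagonal c ∈ doublyStochastic ℝ (Fin n))
    (h2 : Matrix.diagonal r' * X * Matrix.diagonal c' ∈ doublyStochastic ℝ (Fin n)) :
    Matrix.vecMulVec r c = Matrix.vecMulVec r' c' ∧
    Matrix.diagonal r * X * Matrix.diagonal c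
      = Matrix.diagonal r' * X * Matrix.diagonal c' := by
  rcases Nat.eq_zero_or_pos n with hn | hn
  · subst hn
    constructor <;> (ext i j; exact i.elim0)
  -- entry formula
  have entry : ∀ (a b : Fin n → ℝ) (i j : Fin n),
      (Matrix.diagonal a * X * Matrix.diagonal b) i j = a i * X i j * b j := by
    intro a b i j
    simp [Matrix.mul_diagonal, Matrix.diagonal_mul]
  have rowA : ∀ i, ∑ j, r i * X i j * c j = 1 := by
    intro i; have := sum_row_of_mem_doublyStochastic h1 i; simpa [entry] using this
  have colA : ∀ j, ∑ i, r i * X i j * c j = 1 := by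
    intro j; have := sum_col_of_mem_doublyStochastic h1 j; simpa [entry] using this
  have rowB : ∀ i, ∑ j, r' i * X i j * c' j = 1 := by
    intro i; have := sum_row_of_mem_doublyStochastic h2 i; simpa [entry] using this
  have colB : ∀ j, ∑ i, r' i * X i j * c' j = 1 := by
    intro j; have := sum_col_of_mem_doublyStochastic h2 j; simpa [entry] using this
  have hA : ∀ i j, (0:ℝ) < r i * X i j * c j := fun i j => by
    have := hX i j; have := hr i; have := hc j; positivity
  set u : Fin n → ℝ := fun i => r' i / r i with hu
  set v : Fin n → ℝ := fun j => c' j / c j with hv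
  have hupos : ∀ i, 0 < u i := fun i => div_pos (hr' i) (hr i)
  have hvpos : ∀ j, 0 < v j := fun j => div_pos (hc' j) (hc j)
  have hB : ∀ i j, r' i * X i j * c' j = u i * v j * (r i * X i j * c j) := by
    intro i j
    rw [hu, hv]
    have e1 : r' i / r i * r i = r' i := div_mul_cancel₀ _ (hr i).ne'
    have e2 : c' j / c j * c j = c' j := div_mul_cancel₀ _ (hc j).ne'
    calc r' i * X i j * c' j = (r' i / r i * r i) * X i j * (c' j / c j * c j) := by
          rw [e1, e2]
      _ = r' i / r i * (c' j / c j) * (r i * X i j * c j) := by ring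
  have rowB' : ∀ i, ∑ j, u i * v j * (r i * X i j * c j) = 1 := by
    intro i; rw [← rowB i]; exact Finset.sum_congr rfl fun j _ => (hB i j).symm
  have colB' : ∀ j, ∑ i, u i * v j * (r i * X i j * c j) = 1 := by
    intro j; rw [← colB j]; exact Finset.sum_congr rfl fun i _ => (hB i j).symm
  haveI : Nonempty (Fin n) := ⟨⟨0, hn⟩⟩
  obtain ⟨j0, -, hj0⟩ := Finset.exists_min_image Finset.univ v ⟨Classical.arbitrary _, Finset.mem_univ _⟩
  obtain ⟨i0, -, hi0⟩ := Finset.exists_max_image Finset.univ u ⟨Classical.arbitrary _, Finset.mem_univ _⟩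
  replace hj0 : ∀ j, v j0 ≤ v j := fun j => hj0 j (Finset.mem_univ j)
  replace hi0 : ∀ i, u i ≤ u i0 := fun i => hi0 i (Finset.mem_univ i)
  -- step (a): u i * v j0 ≤ 1
  have stepa : ∀ i, u i * v j0 ≤ 1 := by
    intro i
    calc u i * v j0 = ∑ j, u i * v j0 * (r i * X i j * c j) := by
          rw [← Finset.mul_sum, rowA i, mul_one]
      _ ≤ ∑ j, u i * v j * (r i * X i j * c j) := by
          apply Finset.sum_le_sum
          intro j _
          exact mul_le_mul_of_nonneg_right
            (mul_le_mul_of_nonneg_left (hj0 j) (hupos i).le) (hA i j).le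
      _ = 1 := rowB' i
  -- step (b): 1 ≤ u i0 * v j0
  have stepb : (1:ℝ) ≤ u i0 * v j0 := by
    calc (1:ℝ) = ∑ i, u i * v j0 * (r i * X i j0 * c j0) := (colB' j0).symm
      _ ≤ ∑ i, u i0 * v j0 * (r i * X i j0 * c j0) := by
          apply Finset.sum_le_sum
          intro i _
          exact mul_le_mul_of_nonneg_right
            (mul_le_mul_of_nonneg_right (hi0 i) (hvpos j0).le) (hA i j0).le
      _ = u i0 * v j0 := by
          rw [← Finset.mul_sum, colA j0, mul_one]
  have eq0 : u i0 * v j0 = 1 := le_antisymm (stepa i0) stepb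
  -- equality in row i0 forces v constant
  have h2' : ∑ j, u i0 * v j0 * (r i0 * X i0 j * c j) = 1 := by
    rw [← Finset.mul_sum, rowA i0, mul_one]; exact eq0
  have hsum0 : ∑ j, (u i0 * v j * (r i0 * X i0 j * c j)
      - u i0 * v j0 * (r i0 * X i0 j * c j)) = 0 := by
    rw [Finset.sum_sub_distrib, rowB' i0, h2', sub_self]
  have vconst : ∀ j, v j = v j0 := by
    intro j
    have hterm := (Finset.sum_eq_zero_iff_of_nonneg (fun j _ => by
      have := mul_le_mul_of_nonneg_right
        (mul_le_mul_of_nonneg_left (hj0 j) (hupos i0).le) (hA i0 j).le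
      linarith)).mp hsum0 j (Finset.mem_univ j)
    have hpos : 0 < u i0 * (r i0 * X i0 j * c j) :=
      mul_pos (hupos i0) (hA i0 j)
    have h4 : (v j - v j0) * (u i0 * (r i0 * X i0 j * c j)) = 0 := by
      linear_combination hterm
    rcases mul_eq_zero.mp h4 with h | h
    · linarith
    · exact absurd h hpos.ne'
  have uconst : ∀ i, u i * v j0 = 1 := by
    intro i
    have := rowB' i
    have : ∑ j, u i * v j0 * (r i * X i j * c j) = 1 := by
      rw [← this]
      exact Finset.sum_congr rfl fun j _ => by rw [vconst j]
    rwa [← Finset.mul_sum, rowA i, mul_one] at this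
  have key : ∀ i j, r' i * c' j = r i * c j := by
    intro i j
    have h3 : u i * v j = 1 := by rw [vconst j]; exact uconst i
    rw [hu, hv] at h3
    field_simp [(hr i).ne', (hc j).ne'] at h3
    linarith
  constructor
  · ext i j
    simp only [vecMulVec_apply]
    exact (key i j).symm
  · ext i j
    rw [entry, entry]
    calc r i * X i j * c j = X i j * (r i * c j) := by ring
      _ = X i j * (r' i * c' j) := by rw [key]
      _ = r' i * X i j * c' j := by ring
end

section
/- Sinkhorn–Hadamard power rule: for X an n×n matrix with positive entries and nonzero reals a, b, P_sk(X^{∘(ab)}) = P_sk( (P_sk(X^{∘a}))^{∘b} ), where Y^{∘t} denotes the entrywise power (Y^{∘t})_{ij} = Y_{ij}^t. -/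
open Matrix

/-- `P` is the Sinkhorn projection of `X`: a doubly stochastic matrix of the form
`D(r) X D(c)` with positive scaling vectors. -/
def IsSinkhornProj {n : ℕ} (X P : Matrix (Fin n) (Fin n) ℝ) : Prop :=
  ∃ r c : Fin n → ℝ, (∀ i, 0 < r i) ∧ (∀ i, 0 < c i) ∧
    P = Matrix.diagonal r * X * Matrix.diagonal c ∧
    P ∈ doublyStochastic ℝ (Fin n)

/-- Entrywise power of a matrix. -/
noncomputable def hadamardPow {n : ℕ} (X : Matrix (Fin n) (Fin n) ℝ) (t : ℝ) :
    Matrix (Fin n) (Fin n) ℝ :=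
  Matrix.of fun i j => (X i j) ^ t

/-!
A positive matrix has at most one doubly stochastic diagonal scaling, so it suffices
to see that `P_sk(X^{∘a})^{∘b}` is a diagonal scaling of `X^{∘(ab)}`. Writing
`P_sk(X^{∘a}) = D(r) X^{∘a} D(c)`, its entrywise `b`-th power is `D(r^b) X^{∘(ab)} D(c^b)`.
-/

lemma Finset.eq_of_le_of_sum_mul_eq {ι : Type*} [Fintype ι] {w w' b : ι → ℝ}
    (hb : ∀ i, 0 < b i) (hle : ∀ i, w i ≤ w' i)
    (h : ∑ i, w i * b i = ∑ i, w' i * b i) (i : ι) : w i = w' i := by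
  have hle' : ∀ i ∈ Finset.univ, w i * b i ≤ w' i * b i :=
    fun i _ => mul_le_mul_of_nonneg_right (hle i) (hb i).le
  exact mul_right_cancel₀ (hb i).ne' ((Finset.sum_eq_sum_iff_of_le hle').mp h i (mem_univ i))

namespace Matrix

variable {ι : Type*} [Fintype ι] [DecidableEq ι]

lemma diagonal_mul_mul_diagonal_eq_self_of_mem_doublyStochastic {B : Matrix ι ι ℝ}
    {u v : ι → ℝ} (hB : B ∈ doublyStochastic ℝ ι) (hBpos : ∀ i j, 0 < B i j)
    (hv : ∀ j, 0 ≤ v j) (hA : diagonal u * B * diagonal v ∈ doublyStochastic ℝ ι) :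
    diagonal u * B * diagonal v = B := by
  ext i j
  have : Nonempty ι := ⟨i⟩
  have hrow k : ∑ l, u k * B k l * v l = 1 := by
    simpa [diagonal_mul, mul_diagonal] using sum_row_of_mem_doublyStochastic hA k
  have hcol l : ∑ k, u k * B k l * v l = 1 := by
    simpa [diagonal_mul, mul_diagonal] using sum_col_of_mem_doublyStochastic hA l
  -- At a row `k₀` maximising `u`, the column sums give `u k₀ * v l ≥ 1`, row `k₀` forces equality,
  -- and then the column sums force `u k * v l = 1` everywhere.
  obtain ⟨k₀, hk₀⟩ := Finite.exists_max u
  have hMv l : 1 ≤ u k₀ * v l := by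
    calc 1 = ∑ k, u k * B k l * v l := (hcol l).symm
      _ ≤ ∑ k, u k₀ * v l * B k l := Finset.sum_le_sum fun k _ => by
          nlinarith [hk₀ k, mul_nonneg (hBpos k l).le (hv l)]
      _ = u k₀ * v l := by rw [← Finset.mul_sum, sum_col_of_mem_doublyStochastic hB, mul_one]
  have hMv_eq l : u k₀ * v l = 1 := by
    refine (Finset.eq_of_le_of_sum_mul_eq (hBpos k₀) hMv ?_ l).symm
    simp only [one_mul, sum_row_of_mem_doublyStochastic hB]
    rw [← hrow k₀]
    exact Finset.sum_congr rfl fun l _ => by ring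
  have huv_eq k : u k * v j = 1 := by
    refine Finset.eq_of_le_of_sum_mul_eq (fun k => hBpos k j)
      (fun k => hMv_eq j ▸ mul_le_mul_of_nonneg_right (hk₀ k) (hv j)) ?_ k
    simp only [one_mul, sum_col_of_mem_doublyStochastic hB]
    rw [← hcol j]
    exact Finset.sum_congr rfl fun k _ => by ring
  simp only [diagonal_mul, mul_diagonal]
  linear_combination B i j * huv_eq i

end Matrix

lemma hadamardPow_hadamardPow {n : ℕ} {X : Matrix (Fin n) (Fin n) ℝ} (hX : ∀ i j, 0 ≤ X i j)
    (a b : ℝ) : hadamardPow (hadamardPow X a) b = hadamardPow X (a * b) := by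
  ext i j
  simp [hadamardPow, Real.rpow_mul (hX i j)]

lemma hadamardPow_diagonal_mul_mul_diagonal {n : ℕ} {X : Matrix (Fin n) (Fin n) ℝ}
    {r c : Fin n → ℝ} (hX : ∀ i j, 0 ≤ X i j) (hr : ∀ i, 0 ≤ r i) (hc : ∀ j, 0 ≤ c j)
    (t : ℝ) :
    hadamardPow (diagonal r * X * diagonal c) t =
      diagonal (fun i => r i ^ t) * hadamardPow X t * diagonal (fun j => c j ^ t) := by
  ext i j
  simp [hadamardPow, diagonal_mul, mul_diagonal,
    Real.mul_rpow (mul_nonneg (hr i) (hX i j)) (hc j), Real.mul_rpow (hr i) (hX i j)]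

namespace IsSinkhornProj

variable {n : ℕ} {X P Q : Matrix (Fin n) (Fin n) ℝ}

lemma of_diagonal_mul_mul_diagonal {r c : Fin n → ℝ} (hr : ∀ i, 0 < r i) (hc : ∀ j, 0 < c j)
    (hP : IsSinkhornProj (diagonal r * X * diagonal c) P) : IsSinkhornProj X P := by
  obtain ⟨s, d, hs, hd, rfl, hP⟩ := hP
  refine ⟨fun i => s i * r i, fun j => c j * d j, fun i => mul_pos (hs i) (hr i),
    fun j => mul_pos (hc j) (hd j), ?_, hP⟩
  simp only [← diagonal_mul_diagonal, Matrix.mul_assoc]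

lemma of_hadamardPow (hX : ∀ i j, 0 ≤ X i j) (hP : IsSinkhornProj X P) {t : ℝ}
    (hQ : IsSinkhornProj (hadamardPow P t) Q) : IsSinkhornProj (hadamardPow X t) Q := by
  obtain ⟨r, c, hr, hc, rfl, -⟩ := hP
  rw [hadamardPow_diagonal_mul_mul_diagonal hX (fun i => (hr i).le) (fun j => (hc j).le)] at hQ
  exact of_diagonal_mul_mul_diagonal (fun i => Real.rpow_pos_of_pos (hr i) t)
    (fun j => Real.rpow_pos_of_pos (hc j) t) hQ

lemma unique (hX : ∀ i j, 0 < X i j) (hP : IsSinkhornProj X P) (hQ : IsSinkhornProj X Q) :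
    P = Q := by
  obtain ⟨r, c, hr, hc, rfl, hPds⟩ := hP
  obtain ⟨s, d, hs, hd, rfl, hQds⟩ := hQ
  have hQ_eq : diagonal s * X * diagonal d =
      diagonal (s / r) * (diagonal r * X * diagonal c) * diagonal (d / c) := by
    ext i j
    simp only [diagonal_mul, mul_diagonal, Pi.div_apply]
    field_simp [(hr i).ne', (hc j).ne']
  rw [hQ_eq] at hQds ⊢
  refine (diagonal_mul_mul_diagonal_eq_self_of_mem_doublyStochastic hPds (fun i j => ?_)
    (fun j => (div_pos (hd j) (hc j)).le) hQds).symm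
  simpa [diagonal_mul, mul_diagonal] using mul_pos (mul_pos (hr i) (hX i j)) (hc j)

end IsSinkhornProj

theorem stmt7_general {n : ℕ} (X : Matrix (Fin n) (Fin n) ℝ) (a b : ℝ)
    (hX : ∀ i j, 0 < X i j)
    (P Pa Q : Matrix (Fin n) (Fin n) ℝ)
    (hP : IsSinkhornProj (hadamardPow X (a * b)) P)
    (hPa : IsSinkhornProj (hadamardPow X a) Pa)
    (hQ : IsSinkhornProj (hadamardPow Pa b) Q) :
    P = Q := by
  have hXa_nonneg i j : 0 ≤ hadamardPow X a i j := Real.rpow_nonneg (hX i j).le a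
  have hQ' : IsSinkhornProj (hadamardPow X (a * b)) Q := by
    rw [← hadamardPow_hadamardPow (fun i j => (hX i j).le)]
    exact hPa.of_hadamardPow hXa_nonneg hQ
  exact hP.unique (fun i j => Real.rpow_pos_of_pos (hX i j) _) hQ'

/-- Sinkhorn–Hadamard power rule:
`P_sk(X^{∘(ab)}) = P_sk((P_sk(X^{∘a}))^{∘b})` for nonzero reals `a, b`. -/
theorem stmt7 {n : ℕ} (X : Matrix (Fin n) (Fin n) ℝ) (a b : ℝ)
    (hX : ∀ i j, 0 < X i j) (ha : a ≠ 0) (hb : b ≠ 0)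
    (P Pa Q : Matrix (Fin n) (Fin n) ℝ)
    (hP : IsSinkhornProj (hadamardPow X (a * b)) P)
    (hPa : IsSinkhornProj (hadamardPow X a) Pa)
    (hQ : IsSinkhornProj (hadamardPow Pa b) Q) :
    P = Q :=
  stmt7_general X a b hX P Pa Q hP hPa hQ
end

section
/- Equivalence with the proximal point step: with S^β_X = P_sk(exp(βX)) and β₂ > β₁ > 0, the matrix P_sk( S^{β₁}_X ∘ exp((β₂−β₁)X) ) equals S^{β₂}_X. -/
open Matrix

/-- Entrywise exponential of `β • X`. -/
noncomputable def entryExp {n : ℕ} (β : ℝ) (X : Matrix (Fin n) (Fin n) ℝ) :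
    Matrix (Fin n) (Fin n) ℝ :=
  Matrix.of fun i j => Real.exp (β * X i j)

/-! The only diagonal rescaling of an entrywise positive doubly stochastic matrix that is again
doubly stochastic is the trivial one. Two Sinkhorn projections of the same positive matrix are
rescalings of each other, hence equal; and a rank-one Hadamard factor `r cᵀ` is a diagonal
rescaling, so it does not change the projection. Since `S^{β₁}_X = exp(β₁X) ∘ (r cᵀ)`, the matrix
`S^{β₁}_X ∘ exp((β₂ − β₁)X)` is a rescaling of `exp(β₂X)`. -/

theorem Matrix.diagonal_mul_mul_diagonal_eq_self_of_mem_doublyStochastic_s9 {ι : Type*} [Fintype ι]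
    [DecidableEq ι] {P : Matrix ι ι ℝ} {u v : ι → ℝ} (hP : P ∈ doublyStochastic ℝ ι)
    (hP_pos : ∀ i j, 0 < P i j) (hu : ∀ i, 0 < u i) (hv : ∀ j, 0 < v j)
    (hM : diagonal u * P * diagonal v ∈ doublyStochastic ℝ ι) :
    diagonal u * P * diagonal v = P := by
  have hrow : ∀ i, ∑ j, u i * P i j * v j = 1 := by
    simpa only [mul_diagonal, diagonal_mul] using sum_row_of_mem_doublyStochastic hM
  have hcol : ∀ j, ∑ i, u i * P i j * v j = 1 := by
    simpa only [mul_diagonal, diagonal_mul] using sum_col_of_mem_doublyStochastic hM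
  have hProw := sum_row_of_mem_doublyStochastic hP
  ext i j
  have : Nonempty ι := ⟨i⟩
  obtain ⟨i₀, hi₀⟩ := Finite.exists_max u
  obtain ⟨j₀, hj₀⟩ := Finite.exists_min v
  have hlower : 1 ≤ u i₀ * v j₀ :=
    calc 1 = ∑ i, u i * P i j₀ * v j₀ := (hcol j₀).symm
      _ ≤ ∑ i, u i₀ * P i j₀ * v j₀ := by
        gcongr with i
        · exact (hv j₀).le
        · exact (hP_pos i j₀).le
        · exact hi₀ i
      _ = u i₀ * v j₀ := by
        rw [← Finset.sum_mul, ← Finset.mul_sum, sum_col_of_mem_doublyStochastic hP, mul_one]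
  -- In row `i₀`, `∑ⱼ u i₀ P i₀ j v j = 1 ≤ ∑ⱼ u i₀ P i₀ j v j₀` with positive weights and
  -- `v j₀ = min v`, so `v` is constant.
  have hle : ∀ j ∈ Finset.univ, u i₀ * P i₀ j * v j₀ ≤ u i₀ * P i₀ j * v j := fun j _ => by
    gcongr
    · exact (mul_pos (hu i₀) (hP_pos i₀ j)).le
    · exact hj₀ j
  have hsum : ∑ j, u i₀ * P i₀ j * v j₀ = ∑ j, u i₀ * P i₀ j * v j := by
    refine le_antisymm (Finset.sum_le_sum hle) ?_
    rwa [hrow i₀, ← Finset.sum_mul, ← Finset.mul_sum, hProw, mul_one]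
  have hv_const : ∀ j, v j = v j₀ := fun j =>
    (mul_left_cancel₀ (mul_pos (hu i₀) (hP_pos i₀ j)).ne'
      ((Finset.sum_eq_sum_iff_of_le hle).1 hsum j (Finset.mem_univ j))).symm
  have huv : u i * v j₀ = 1 := by
    rw [← hrow i, Finset.sum_congr rfl fun j _ => by rw [hv_const j], ← Finset.sum_mul,
      ← Finset.mul_sum, hProw, mul_one]
  rw [mul_diagonal, diagonal_mul, hv_const j]
  linear_combination P i j * huv

theorem Matrix.diagonal_mul_mul_diagonal_assoc {ι : Type*} [Fintype ι] [DecidableEq ι]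
    (a r c b : ι → ℝ) (Y : Matrix ι ι ℝ) :
    diagonal a * (diagonal r * Y * diagonal c) * diagonal b =
      diagonal (a * r) * Y * diagonal (c * b) := by
  ext i j
  simp only [mul_diagonal, diagonal_mul, Pi.mul_apply]
  ring

theorem Matrix.diagonal_mul_mul_diagonal_hadamard {ι : Type*} [Fintype ι] [DecidableEq ι]
    (r c : ι → ℝ) (A B : Matrix ι ι ℝ) :
    (diagonal r * A * diagonal c) ⊙ B = diagonal r * (A ⊙ B) * diagonal c := by
  ext i j
  simp only [hadamard_apply, mul_diagonal, diagonal_mul]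
  ring

theorem entryExp_hadamard {n : ℕ} (a b : ℝ) (X : Matrix (Fin n) (Fin n) ℝ) :
    entryExp a X ⊙ entryExp b X = entryExp (a + b) X := by
  ext i j
  simp only [entryExp, hadamard_apply, of_apply, ← Real.exp_add, add_mul]

theorem entryExp_pos {n : ℕ} (β : ℝ) (X : Matrix (Fin n) (Fin n) ℝ) (i j : Fin n) :
    0 < entryExp β X i j :=
  Real.exp_pos _

theorem isSinkhornProj_diagonal_mul_mul_diagonal_iff {n : ℕ} {Y P : Matrix (Fin n) (Fin n) ℝ}
    {r c : Fin n → ℝ} (hr : ∀ i, 0 < r i) (hc : ∀ i, 0 < c i) :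
    IsSinkhornProj (diagonal r * Y * diagonal c) P ↔ IsSinkhornProj Y P := by
  constructor
  · rintro ⟨a, b, ha, hb, rfl, hP⟩
    exact ⟨a * r, c * b, fun i => mul_pos (ha i) (hr i), fun i => mul_pos (hc i) (hb i),
      diagonal_mul_mul_diagonal_assoc a r c b Y, diagonal_mul_mul_diagonal_assoc a r c b Y ▸ hP⟩
  · rintro ⟨a, b, ha, hb, rfl, hP⟩
    have hY : diagonal a * Y * diagonal b =
        diagonal (a / r) * (diagonal r * Y * diagonal c) * diagonal (b / c) := by
      rw [diagonal_mul_mul_diagonal_assoc]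
      congr <;> ext i
      · exact (div_mul_cancel₀ _ (hr i).ne').symm
      · exact (mul_div_cancel₀ _ (hc i).ne').symm
    exact ⟨a / r, b / c, fun i => div_pos (ha i) (hr i), fun i => div_pos (hb i) (hc i), hY, hP⟩

theorem IsSinkhornProj.unique_s9 {n : ℕ} {Y P P' : Matrix (Fin n) (Fin n) ℝ}
    (hY : ∀ i j, 0 < Y i j) (hP : IsSinkhornProj Y P) (hP' : IsSinkhornProj Y P') : P = P' := by
  obtain ⟨r, c, hr, hc, rfl, hP'_ds⟩ := hP'
  obtain ⟨a, b, ha, hb, rfl, hP_ds⟩ := (isSinkhornProj_diagonal_mul_mul_diagonal_iff hr hc).2 hP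
  refine diagonal_mul_mul_diagonal_eq_self_of_mem_doublyStochastic_s9 hP'_ds (fun i j => ?_) ha hb
    hP_ds
  simpa only [mul_diagonal, diagonal_mul] using mul_pos (mul_pos (hr i) (hY i j)) (hc j)

theorem stmt9_general {n : ℕ} (X : Matrix (Fin n) (Fin n) ℝ) (β₁ β₂ : ℝ)
    (S₁ S₂ Q : Matrix (Fin n) (Fin n) ℝ)
    (hS₁ : IsSinkhornProj (entryExp β₁ X) S₁)
    (hS₂ : IsSinkhornProj (entryExp β₂ X) S₂)
    (hQ : IsSinkhornProj (Matrix.hadamard S₁ (entryExp (β₂ - β₁) X)) Q) :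
    Q = S₂ := by
  obtain ⟨r, c, hr, hc, rfl, -⟩ := hS₁
  rw [diagonal_mul_mul_diagonal_hadamard, entryExp_hadamard, add_sub_cancel,
    isSinkhornProj_diagonal_mul_mul_diagonal_iff hr hc] at hQ
  exact hQ.unique_s9 (entryExp_pos β₂ X) hS₂

/-- Equivalence with the proximal point step: with `S^β_X = P_sk(exp(βX))` and
`β₂ > β₁ > 0`, the matrix `P_sk(S^{β₁}_X ∘ exp((β₂ − β₁)X))` equals `S^{β₂}_X`. -/
theorem stmt9 {n : ℕ} (X : Matrix (Fin n) (Fin n) ℝ) (β₁ β₂ : ℝ)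
    (hβ₁ : 0 < β₁) (hβ₁₂ : β₁ < β₂)
    (S₁ S₂ Q : Matrix (Fin n) (Fin n) ℝ)
    (hS₁ : IsSinkhornProj (entryExp β₁ X) S₁)
    (hS₂ : IsSinkhornProj (entryExp β₂ X) S₂)
    (hQ : IsSinkhornProj (Matrix.hadamard S₁ (entryExp (β₂ - β₁) X)) Q) :
    Q = S₂ :=
  stmt9_general X β₁ β₂ S₁ S₂ Q hS₁ hS₂ hQ
end
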